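/- One-to-one correspondence between grounding derivations and grounding trees: for every grounding derivation d there is exactly one grounding tree that corresponds to d, and for every grounding tree t there is at most one grounding derivation that corresponds to t. -/

import Mathlib

/-! A derivation determines its grounding tree: read each child as a plain formula if it is a
leaf and as a nested subtree otherwise. Conversely a grounding tree records every label together
with the leaf/non-leaf shape of every child, so `Corr` is functional in both directions, by a
simultaneous structural induction over trees and lists of children. -/

inductive DTree (α : Type*) : Type _ where
  | leaf (a : α)
  | node (a : α) (gchildren cchildren : List (DTree α))

namespace DTree
variable {α : Type*}

def label : DTree α → α
  | .leaf a => a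
  | .node a _ _ => a

def isLeaf : DTree α → Prop
  | .leaf _ => True
  | .node _ _ _ => False

end DTree

inductive DValid {α : Type*} (R : List α → List α → α → Prop) : DTree α → Prop where
  | leaf (a : α) : DValid R (.leaf a)
  | node (a : α) (gs cs : List (DTree α)) :
      R (gs.map DTree.label) (cs.map DTree.label) a →
      (∀ t ∈ gs, DValid R t) → (∀ t ∈ cs, DValid R t) →
      DValid R (.node a gs cs)

/-- A grounding derivation for the immediate grounding relation `R`. -/
structure GDeriv {α : Type*} (R : List α → List α → α → Prop) where
  tree : DTree α
  valid : DValid R tree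
  nonleaf : ¬ tree.isLeaf

inductive GTree (α : Type*) : Type _ where
  | mk (grounds : List (α ⊕ GTree α)) (conds : List (α ⊕ GTree α)) (concl : α)

namespace GTree
variable {α : Type*}

def concl : GTree α → α
  | .mk _ _ b => b

end GTree

universe u

mutual
/-- Correspondence between grounding trees and grounding derivations. -/
inductive Corr {α : Type u} : GTree α → DTree α → Prop where
  | mk {G C : List (α ⊕ GTree α)} {B : α} {gs cs : List (DTree α)} :
      CorrList G gs → CorrList C cs → Corr (.mk G C B) (.node B gs cs)

/-- Entry-by-entry correspondence between a list of grounding-tree entries and a list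
of child subderivations: a plain entry `Sum.inl a` matches a leaf labelled `a`, and a
subtree entry `Sum.inr s` matches a non-leaf child whose subderivation corresponds to `s`. -/
inductive CorrList {α : Type u} : List (α ⊕ GTree α) → List (DTree α) → Prop where
  | nil : CorrList [] []
  | consFm {a : α} {G : List (α ⊕ GTree α)} {gs : List (DTree α)} :
      CorrList G gs → CorrList (Sum.inl a :: G) (DTree.leaf a :: gs)
  | consTr {s : GTree α} {t : DTree α} {G : List (α ⊕ GTree α)} {gs : List (DTree α)} :
      Corr s t → ¬ t.isLeaf → CorrList G gs → CorrList (Sum.inr s :: G) (t :: gs)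
end

variable {α : Type u}

namespace DTree

mutual
/-- On a leaf this is a junk value: leaves correspond to no grounding tree. -/
def toGTree : DTree α → GTree α
  | .leaf a => .mk [] [] a
  | .node a gs cs => .mk (toEntries gs) (toEntries cs) a

def toEntries : List (DTree α) → List (α ⊕ GTree α)
  | [] => []
  | .leaf a :: ts => .inl a :: toEntries ts
  | .node a gs cs :: ts => .inr (toGTree (.node a gs cs)) :: toEntries ts
end

mutual
theorem corr_toGTree : ∀ d : DTree α, ¬ d.isLeaf → Corr d.toGTree d
  | .leaf _, h => absurd trivial h
  | .node _ gs cs, _ => Corr.mk (corrList_toEntries gs) (corrList_toEntries cs)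

theorem corrList_toEntries : ∀ ts : List (DTree α), CorrList (toEntries ts) ts
  | [] => .nil
  | .leaf _ :: ts => .consFm (corrList_toEntries ts)
  | .node _ _ _ :: ts => .consTr (corr_toGTree _ id) id (corrList_toEntries ts)
end

end DTree

mutual
theorem Corr.left_unique : ∀ {t t' : GTree α} {d : DTree α}, Corr t d → Corr t' d → t = t'
  | _, _, .node _ _ _, .mk hG hC, .mk hG' hC' => by
      rw [CorrList.left_unique hG hG', CorrList.left_unique hC hC']

theorem CorrList.left_unique : ∀ {G G' : List (α ⊕ GTree α)} {ds : List (DTree α)},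
    CorrList G ds → CorrList G' ds → G = G'
  | _, _, [], .nil, .nil => rfl
  | _, _, .leaf _ :: _, .consFm h, .consFm h' => by rw [CorrList.left_unique h h']
  | _, _, .leaf _ :: _, .consFm _, .consTr _ hn _ => absurd trivial hn
  | _, _, .leaf _ :: _, .consTr _ hn _, _ => absurd trivial hn
  | _, _, .node _ _ _ :: _, .consTr hc _ h, .consTr hc' _ h' => by
      rw [Corr.left_unique hc hc', CorrList.left_unique h h']
end

mutual
theorem Corr.right_unique : ∀ {t : GTree α} {d d' : DTree α}, Corr t d → Corr t d' → d = d'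
  | .mk _ _ _, _, _, .mk hG hC, .mk hG' hC' => by
      rw [CorrList.right_unique hG hG', CorrList.right_unique hC hC']

theorem CorrList.right_unique : ∀ {G : List (α ⊕ GTree α)} {ds ds' : List (DTree α)},
    CorrList G ds → CorrList G ds' → ds = ds'
  | [], _, _, .nil, .nil => rfl
  | .inl _ :: _, _, _, .consFm h, .consFm h' => by rw [CorrList.right_unique h h']
  | .inr _ :: _, _, _, .consTr hc _ h, .consTr hc' _ h' => by
      rw [Corr.right_unique hc hc', CorrList.right_unique h h']
end

theorem GDeriv.tree_injective {R : List α → List α → α → Prop} :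
    Function.Injective (GDeriv.tree (R := R))
  | ⟨_, _, _⟩, ⟨_, _, _⟩, rfl => rfl

theorem corr_one_to_one {α : Type*} (R : List α → List α → α → Prop) :
    (∀ d : GDeriv R, ∃! t : GTree α, Corr t d.tree) ∧
    (∀ t : GTree α, ∀ d d' : GDeriv R, Corr t d.tree → Corr t d'.tree → d = d') := by
  refine ⟨fun d => ?_, fun t d d' h h' => GDeriv.tree_injective (h.right_unique h')⟩
  have hd := d.tree.corr_toGTree d.nonleaf
  exact ⟨d.tree.toGTree, hd, fun t ht => ht.left_unique hd⟩
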